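/- arXiv:1907.04520 — 4 statements merged into one kernel-verified Lean document; each statement's English description precedes it below -/
import Mathlib

section
/- Let σ > 0, α > 0, and define u(x) = exp(-(|x|²)/(2σ²) - 1/(2σ²) - N/(2α)) for x ∈ ℝ^N. Then u is a C² function with values in (0,1], and it is a subsolution of the semilinear equation, i.e., -Δu(x) + (1/σ⁴)|x|²u(x) ≤ -(2α/σ²) u(x) ln u(x) for all x ∈ ℝ^N. -/
/-!
`u = exp (a‖x‖² + b)` with `a = -1/(2σ²)`, and for such a Gaussian the Laplacian is explicit:
`Δu = u (4a²‖x‖² + 2aN)`. Substituting, the right side of the inequality exceeds the left by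
`α (‖x‖² + 1) u(x) / σ⁴ ≥ 0`.
-/

noncomputable def laplacian {N : ℕ} (f : EuclideanSpace ℝ (Fin N) → ℝ)
    (x : EuclideanSpace ℝ (Fin N)) : ℝ :=
  ∑ i : Fin N, fderiv ℝ (fun y => fderiv ℝ f y (EuclideanSpace.single i 1)) x
      (EuclideanSpace.single i 1)

lemma hasFDerivAt_exp_mul_norm_sq_add {E : Type*} [NormedAddCommGroup E]
    [InnerProductSpace ℝ E] (a b : ℝ) (x : E) :
    HasFDerivAt (fun y : E => Real.exp (a * ‖y‖ ^ 2 + b))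
      ((Real.exp (a * ‖x‖ ^ 2 + b) * (2 * a)) • innerSL ℝ x) x := by
  have h := (((hasFDerivAt_id x).norm_sq.const_mul a).add_const b).exp
  refine h.congr_fderiv ?_
  ext v
  simp only [id_eq, ContinuousLinearMap.comp_id, smul_apply, coe_innerSL_apply, nsmul_eq_mul,
    Nat.cast_ofNat, smul_eq_mul]
  ring

section Euclidean

variable {N : ℕ} (a b : ℝ)

lemma fderiv_exp_mul_norm_sq_add_single (i : Fin N) (y : EuclideanSpace ℝ (Fin N)) :
    fderiv ℝ (fun y : EuclideanSpace ℝ (Fin N) => Real.exp (a * ‖y‖ ^ 2 + b)) y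
        (EuclideanSpace.single i 1) =
      Real.exp (a * ‖y‖ ^ 2 + b) * (2 * a) * y i := by
  simp [(hasFDerivAt_exp_mul_norm_sq_add a b y).fderiv, EuclideanSpace.inner_single_right]

lemma laplacian_exp_mul_norm_sq_add (x : EuclideanSpace ℝ (Fin N)) :
    laplacian (fun y => Real.exp (a * ‖y‖ ^ 2 + b)) x =
      Real.exp (a * ‖x‖ ^ 2 + b) * (4 * a ^ 2 * ‖x‖ ^ 2 + 2 * a * N) := by
  have second_partial (i : Fin N) :
      fderiv ℝ (fun y => Real.exp (a * ‖y‖ ^ 2 + b) * (2 * a) * y i) x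
          (EuclideanSpace.single i 1) =
        Real.exp (a * ‖x‖ ^ 2 + b) * (4 * a ^ 2 * x i ^ 2 + 2 * a) := by
    have h : HasFDerivAt (fun y => Real.exp (a * ‖y‖ ^ 2 + b) * (2 * a) * y i) _ x :=
      ((hasFDerivAt_exp_mul_norm_sq_add a b x).mul_const (2 * a)).mul
        (EuclideanSpace.proj i : EuclideanSpace ℝ (Fin N) →L[ℝ] ℝ).hasFDerivAt
    rw [h.fderiv]
    simp only [add_apply, smul_apply, PiLp.proj_apply, PiLp.single_eq_same, smul_eq_mul, mul_one,
      coe_innerSL_apply, EuclideanSpace.inner_single_right, Real.ringHom_apply, one_mul]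
    ring
  simp only [laplacian, fderiv_exp_mul_norm_sq_add_single, second_partial]
  simp only [mul_add, Finset.sum_add_distrib, ← Finset.mul_sum, Finset.sum_const, Finset.card_univ,
    Fintype.card_fin, EuclideanSpace.real_norm_sq_eq, nsmul_eq_mul]
  ring

end Euclidean

theorem stmt1_general (N : ℕ) (σ α : ℝ) (hσ : 0 < σ) (hα : 0 < α)
    (u : EuclideanSpace ℝ (Fin N) → ℝ)
    (hu : ∀ x, u x = Real.exp (-‖x‖ ^ 2 / (2 * σ ^ 2) - 1 / (2 * σ ^ 2) - N / (2 * α))) :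
    ContDiff ℝ 2 u ∧ (∀ x, 0 < u x ∧ u x ≤ 1) ∧
      ∀ x, -laplacian u x + (1 / σ ^ 4) * ‖x‖ ^ 2 * u x
          ≤ -(2 * α / σ ^ 2) * u x * Real.log (u x) := by
  obtain rfl : u = fun y => Real.exp (-(1 / (2 * σ ^ 2)) * ‖y‖ ^ 2
      + (-(1 / (2 * σ ^ 2)) - N / (2 * α))) := by
    funext y
    rw [hu y]
    ring_nf
  refine ⟨Real.contDiff_exp.comp
      ((contDiff_const.mul (contDiff_norm_sq ℝ)).add contDiff_const), fun x => ?_, fun x => ?_⟩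
  · refine ⟨Real.exp_pos _, Real.exp_le_one_iff.mpr ?_⟩
    have : 0 ≤ 1 / (2 * σ ^ 2) * (‖x‖ ^ 2 + 1) + N / (2 * α) := by positivity
    linarith
  · rw [laplacian_exp_mul_norm_sq_add, Real.log_exp]
    rw [← sub_nonneg]
    field_simp
    ring_nf
    positivity

theorem stmt1 (N : ℕ) (hN : 1 ≤ N) (σ α : ℝ) (hσ : 0 < σ) (hα : 0 < α)
    (u : EuclideanSpace ℝ (Fin N) → ℝ)
    (hu : ∀ x, u x = Real.exp (-‖x‖ ^ 2 / (2 * σ ^ 2) - 1 / (2 * σ ^ 2) - N / (2 * α))) :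
    ContDiff ℝ 2 u ∧ (∀ x, 0 < u x ∧ u x ≤ 1) ∧
      ∀ x, -laplacian u x + (1 / σ ^ 4) * ‖x‖ ^ 2 * u x
          ≤ -(2 * α / σ ^ 2) * u x * Real.log (u x) :=
  stmt1_general N σ α hσ hα u hu
end

section
/- Let α = Nσ² and m = (α - √(α² + 4))/(4σ²). Then m < 0, and z(x) := -2σ²m(|x|² + 1) satisfies z(x) > 0 for all x ∈ ℝ^N and solves -2σ²Δz + |∇z|² + 4αz = 4|x|² on ℝ^N. -/
/-!
The function `z = c (|x|² + 1)` with `c = -2σ²m` has `∇z = 2c x` and `Δz = 2cN`, so the equation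
reduces to `4(c² + αc)|x|² + 4c(α - Nσ²) = 4|x|²`. The choice of `m` makes `c` the positive root of
`c² + αc = 1`, and `α = Nσ²` cancels the constant term.
-/

open scoped RealInnerProductSpace

section Paraboloid

variable {E : Type*} [NormedAddCommGroup E] [InnerProductSpace ℝ E]

theorem hasFDerivAt_const_mul_norm_sq_add_one (c : ℝ) (y : E) :
    HasFDerivAt (fun x : E => c * (‖x‖ ^ 2 + 1)) ((2 * c) • innerSL ℝ y) y := by
  refine (((hasStrictFDerivAt_norm_sq y).hasFDerivAt.add_const 1).const_mul c).congr_fderiv ?_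
  module

theorem fderiv_const_mul_norm_sq_add_one_apply (c : ℝ) (y v : E) :
    fderiv ℝ (fun x : E => c * (‖x‖ ^ 2 + 1)) y v = 2 * c * ⟪y, v⟫ := by
  simp [(hasFDerivAt_const_mul_norm_sq_add_one c y).fderiv]

theorem fderiv_fderiv_const_mul_norm_sq_add_one_apply (c : ℝ) (v x w : E) :
    fderiv ℝ (fun y => fderiv ℝ (fun x : E => c * (‖x‖ ^ 2 + 1)) y v) x w = 2 * c * ⟪v, w⟫ := by
  have h : (fun y => fderiv ℝ (fun x : E => c * (‖x‖ ^ 2 + 1)) y v) = (2 * c) • innerSL ℝ v := by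
    ext y
    simp [fderiv_const_mul_norm_sq_add_one_apply, real_inner_comm]
  rw [h, ContinuousLinearMap.fderiv]
  simp

theorem gradient_const_mul_norm_sq_add_one [CompleteSpace E] (c : ℝ) (y : E) :
    gradient (fun x : E => c * (‖x‖ ^ 2 + 1)) y = (2 * c) • y := by
  refine HasGradientAt.gradient ?_
  rw [hasGradientAt_iff_hasFDerivAt, map_smul]
  exact hasFDerivAt_const_mul_norm_sq_add_one c y

end Paraboloid

theorem laplacian_const_mul_norm_sq_add_one {N : ℕ} (c : ℝ) (x : EuclideanSpace ℝ (Fin N)) :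
    laplacian (fun x => c * (‖x‖ ^ 2 + 1)) x = 2 * c * N := by
  simp [laplacian, fderiv_fderiv_const_mul_norm_sq_add_one_apply, mul_comm]

theorem pos_and_sq_add_mul_eq_one_of_two_mul_add_eq_sqrt {α c : ℝ}
    (hc : 2 * c + α = √(α ^ 2 + 4)) : 0 < c ∧ c ^ 2 + α * c = 1 := by
  have hsq : (2 * c + α) ^ 2 = α ^ 2 + 4 := by rw [hc]; exact Real.sq_sqrt (by positivity)
  have hnonneg : 0 ≤ 2 * c + α := hc ▸ Real.sqrt_nonneg _
  constructor <;> nlinarith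

theorem stmt7_general (N : ℕ) (σ α m : ℝ) (hσ : 0 < σ)
    (hα : α = N * σ ^ 2)
    (hm : m = (α - Real.sqrt (α ^ 2 + 4)) / (4 * σ ^ 2))
    (z : EuclideanSpace ℝ (Fin N) → ℝ)
    (hz : ∀ x, z x = -2 * σ ^ 2 * m * (‖x‖ ^ 2 + 1)) :
    m < 0 ∧ (∀ x, 0 < z x) ∧
      ∀ x, -2 * σ ^ 2 * laplacian z x + ‖gradient z x‖ ^ 2 + 4 * α * z x
          = 4 * ‖x‖ ^ 2 := by
  set c := -2 * σ ^ 2 * m with hc_def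
  have hc : 2 * c + α = √(α ^ 2 + 4) := by
    rw [hc_def, hm]
    field_simp
    ring
  obtain ⟨hc_pos, hc_root⟩ := pos_and_sq_add_mul_eq_one_of_two_mul_add_eq_sqrt hc
  obtain rfl : z = fun x => c * (‖x‖ ^ 2 + 1) := funext hz
  refine ⟨by nlinarith [sq_pos_of_pos hσ], fun x => by positivity, fun x => ?_⟩
  rw [laplacian_const_mul_norm_sq_add_one, gradient_const_mul_norm_sq_add_one, norm_smul,
    Real.norm_eq_abs, mul_pow, sq_abs]
  linear_combination (4 * c) * hα + 4 * ‖x‖ ^ 2 * hc_root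

theorem stmt7 (N : ℕ) (hN : 1 ≤ N) (σ α m : ℝ) (hσ : 0 < σ)
    (hα : α = N * σ ^ 2)
    (hm : m = (α - Real.sqrt (α ^ 2 + 4)) / (4 * σ ^ 2))
    (z : EuclideanSpace ℝ (Fin N) → ℝ)
    (hz : ∀ x, z x = -2 * σ ^ 2 * m * (‖x‖ ^ 2 + 1)) :
    m < 0 ∧ (∀ x, 0 < z x) ∧
      ∀ x, -2 * σ ^ 2 * laplacian z x + ‖gradient z x‖ ^ 2 + 4 * α * z x
          = 4 * ‖x‖ ^ 2 :=
  stmt7_general N σ α m hσ hα hm z hz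
end

section
/- Let α = Nσ² and m = (α + √(α² + 4))/(4σ²). Then m > 0, and z(x) := -2σ²m(|x|² + 1) satisfies z(x) < 0 for all x ∈ ℝ^N and solves -2σ²Δz + |∇z|² + 4αz = 4|x|² on ℝ^N. -/
/-!
The candidate `z = c (‖x‖² + 1)` with `c = -2σ²m = -(α + √(α² + 4))/2` has gradient `2c x` and
Laplacian `2cN`. Substituting, the constant terms `-4σ²Nc + 4αc` cancel because `α = Nσ²`, and the
coefficient of `‖x‖²` is `4(c² + αc)`, which equals `4` because `c` is the negative root of
`c² + αc - 1 = 0`.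
-/

section Quadratic

variable {E : Type*} [NormedAddCommGroup E] [InnerProductSpace ℝ E]

theorem hasFDerivAt_const_mul_norm_sq_add (a b : ℝ) (y : E) :
    HasFDerivAt (fun x : E => a * ‖x‖ ^ 2 + b) (a • (2 • innerSL ℝ y)) y :=
  (((hasStrictFDerivAt_norm_sq y).hasFDerivAt).const_mul a).add_const b

theorem gradient_const_mul_norm_sq_add [CompleteSpace E] (a b : ℝ) (y : E) :
    gradient (fun x : E => a * ‖x‖ ^ 2 + b) y = (2 * a) • y := by
  refine HasGradientAt.gradient ?_
  rw [hasGradientAt_iff_hasFDerivAt]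
  refine (hasFDerivAt_const_mul_norm_sq_add a b y).congr_fderiv ?_
  ext v
  simp [mul_left_comm, mul_assoc]

end Quadratic

theorem laplacian_const_mul_norm_sq_add {N : ℕ} (a b : ℝ) (y : EuclideanSpace ℝ (Fin N)) :
    laplacian (fun x : EuclideanSpace ℝ (Fin N) => a * ‖x‖ ^ 2 + b) y = 2 * a * N := by
  have partial_eq (i : Fin N) :
      (fun w => fderiv ℝ (fun x : EuclideanSpace ℝ (Fin N) => a * ‖x‖ ^ 2 + b) w
        (EuclideanSpace.single i 1)) = ⇑((2 * a) • EuclideanSpace.proj (𝕜 := ℝ) i) := by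
    funext w
    simp [(hasFDerivAt_const_mul_norm_sq_add a b w).fderiv, EuclideanSpace.inner_single_right]
    ring
  simp only [laplacian, partial_eq, ContinuousLinearMap.fderiv]
  simp [mul_comm]

theorem neg_root_sq_add_mul (α : ℝ) :
    (-(α + √(α ^ 2 + 4)) / 2) ^ 2 + α * (-(α + √(α ^ 2 + 4)) / 2) = 1 := by
  have hs : √(α ^ 2 + 4) ^ 2 = α ^ 2 + 4 := Real.sq_sqrt (by positivity)
  linear_combination hs / 4

theorem add_sqrt_sq_add_four_pos (α : ℝ) : 0 < α + √(α ^ 2 + 4) := by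
  have : |α| < √(α ^ 2 + 4) := by
    rw [← Real.sqrt_sq_eq_abs]
    exact Real.sqrt_lt_sqrt (sq_nonneg α) (by linarith)
  linarith [neg_abs_le α]

theorem stmt8_general (N : ℕ) (σ α m : ℝ) (hσ : 0 < σ)
    (hα : α = N * σ ^ 2)
    (hm : m = (α + Real.sqrt (α ^ 2 + 4)) / (4 * σ ^ 2))
    (z : EuclideanSpace ℝ (Fin N) → ℝ)
    (hz : ∀ x, z x = -2 * σ ^ 2 * m * (‖x‖ ^ 2 + 1)) :
    0 < m ∧ (∀ x, z x < 0) ∧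
      ∀ x, -2 * σ ^ 2 * laplacian z x + ‖gradient z x‖ ^ 2 + 4 * α * z x
          = 4 * ‖x‖ ^ 2 := by
  have hm_pos : 0 < m := hm ▸ div_pos (add_sqrt_sq_add_four_pos α) (by positivity)
  set c := -2 * σ ^ 2 * m with hc
  have hc_root : c = -(α + √(α ^ 2 + 4)) / 2 := by
    rw [hc, hm]; field_simp; ring
  have hc_quad : c ^ 2 + α * c = 1 := hc_root ▸ neg_root_sq_add_mul α
  have hz_eq : z = fun x => c * ‖x‖ ^ 2 + c := funext fun x => by rw [hz]; ring
  refine ⟨hm_pos, fun x => ?_, fun x => ?_⟩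
  · rw [hz x]
    exact mul_neg_of_neg_of_pos (by nlinarith [sq_pos_of_pos hσ]) (by positivity)
  · rw [hz_eq, laplacian_const_mul_norm_sq_add, gradient_const_mul_norm_sq_add, norm_smul,
      Real.norm_eq_abs, mul_pow, sq_abs]
    linear_combination (-4 * c) * hα.symm + (4 * ‖x‖ ^ 2) * hc_quad

theorem stmt8 (N : ℕ) (hN : 1 ≤ N) (σ α m : ℝ) (hσ : 0 < σ)
    (hα : α = N * σ ^ 2)
    (hm : m = (α + Real.sqrt (α ^ 2 + 4)) / (4 * σ ^ 2))
    (z : EuclideanSpace ℝ (Fin N) → ℝ)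
    (hz : ∀ x, z x = -2 * σ ^ 2 * m * (‖x‖ ^ 2 + 1)) :
    0 < m ∧ (∀ x, z x < 0) ∧
      ∀ x, -2 * σ ^ 2 * laplacian z x + ‖gradient z x‖ ^ 2 + 4 * α * z x
          = 4 * ‖x‖ ^ 2 :=
  stmt8_general N σ α m hσ hα hm z hz
end

section
/- Let z : ℝ^N → ℝ be a convex differentiable function satisfying 0 ≤ z(x) ≤ |x|² + 1 + C for all x ∈ ℝ^N, where C ≥ 0 is a constant. Then there exists a constant K > 0 such that |∇z(x)| ≤ K(1 + |x|) for all x ∈ ℝ^N. -/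
open Set

/-!
Convexity gives `⟪∇z x, y⟫ ≤ z (x + y) - z x`. Taking `y` in the direction of `∇z x` with
`‖y‖ = 1 + ‖x‖` and using `0 ≤ z ≤ ‖·‖² + 1 + C` bounds `(1 + ‖x‖) ‖∇z x‖` by a quadratic in
`1 + ‖x‖`.
-/

theorem ConvexOn.hasFDerivAt_apply_le_sub {E : Type*} [NormedAddCommGroup E] [NormedSpace ℝ E]
    {S : Set E} {f : E → ℝ} {f' : E →L[ℝ] ℝ} {x y : E} (hf : ConvexOn ℝ S f) (hx : x ∈ S)
    (hxy : x + y ∈ S) (hf' : HasFDerivAt f f' x) : f' y ≤ f (x + y) - f x := by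
  set ℓ : ℝ →ᵃ[ℝ] E := AffineMap.lineMap x (x + y)
  have hℓ : HasDerivAt (f ∘ ℓ) (f' y) 0 := by
    have hf'0 : HasFDerivAt f f' (ℓ 0) := by simpa [ℓ] using hf'
    simpa [ℓ] using hf'0.comp_hasDerivAt 0 AffineMap.hasDerivAt_lineMap
  have h := (hf.comp_affineMap ℓ).le_slope_of_hasDerivAt (x := 0) (y := 1)
    (by simpa [ℓ] using hx) (by simpa [ℓ] using hxy) zero_lt_one hℓ
  simpa [slope_def_field, ℓ] using h

theorem ConvexOn.norm_gradient_le_of_sub_le {F : Type*} [NormedAddCommGroup F]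
    [InnerProductSpace ℝ F] [CompleteSpace F] {f : F → ℝ} {x : F} {r M : ℝ}
    (hf : ConvexOn ℝ univ f) (hfx : DifferentiableAt ℝ f x) (hr : 0 < r)
    (hM : ∀ y, ‖y‖ ≤ r → f (x + y) - f x ≤ M) : ‖gradient f x‖ ≤ M / r := by
  set g := gradient f x
  -- When `g = 0` this is `y = 0`, since `r / 0 = 0`.
  set y := (r / ‖g‖) • g
  have hy : ‖y‖ ≤ r := by
    rcases eq_or_ne g 0 with hg | hg
    · simp [y, hg, hr.le]
    · rw [norm_smul, norm_div, Real.norm_of_nonneg hr.le, norm_norm,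
        div_mul_cancel₀ _ (norm_ne_zero_iff.mpr hg)]
  have hgy : inner ℝ g y = r * ‖g‖ := by
    rw [real_inner_smul_right, real_inner_self_eq_norm_sq]
    rcases eq_or_ne ‖g‖ 0 with hg | hg
    · simp [hg]
    · field_simp
  have hderiv : HasFDerivAt f (InnerProductSpace.toDual ℝ F g) x :=
    hasGradientAt_iff_hasFDerivAt.mp hfx.hasGradientAt
  have key : r * ‖g‖ ≤ M := by
    calc r * ‖g‖ = inner ℝ g y := hgy.symm
      _ ≤ f (x + y) - f x := hf.hasFDerivAt_apply_le_sub (mem_univ _) (mem_univ _) hderiv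
      _ ≤ M := hM y hy
  rwa [le_div_iff₀ hr, mul_comm]

theorem stmt11_general (N : ℕ) (C : ℝ) (hC : 0 ≤ C)
    (z : EuclideanSpace ℝ (Fin N) → ℝ)
    (hconv : ConvexOn ℝ Set.univ z) (hdiff : Differentiable ℝ z)
    (hbnd : ∀ x, 0 ≤ z x ∧ z x ≤ ‖x‖ ^ 2 + 1 + C) :
    ∃ K > 0, ∀ x, ‖gradient z x‖ ≤ K * (1 + ‖x‖) := by
  refine ⟨5 + C, by positivity, fun x => ?_⟩
  have hx := norm_nonneg x
  have hosc : ∀ y, ‖y‖ ≤ 1 + ‖x‖ → z (x + y) - z x ≤ (1 + 2 * ‖x‖) ^ 2 + 1 + C := by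
    intro y hy
    have hxy : ‖x + y‖ ≤ 1 + 2 * ‖x‖ := by linarith [norm_add_le x y]
    have hsq : ‖x + y‖ ^ 2 ≤ (1 + 2 * ‖x‖) ^ 2 := pow_le_pow_left₀ (norm_nonneg _) hxy 2
    linarith [(hbnd x).1, (hbnd (x + y)).2]
  calc ‖gradient z x‖ ≤ ((1 + 2 * ‖x‖) ^ 2 + 1 + C) / (1 + ‖x‖) :=
        hconv.norm_gradient_le_of_sub_le (hdiff x) (by positivity) hosc
    _ ≤ (5 + C) * (1 + ‖x‖) := by
        rw [div_le_iff₀ (by positivity)]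
        nlinarith [mul_nonneg hC (mul_nonneg hx hx), mul_nonneg hC hx]

theorem stmt11 (N : ℕ) (hN : 1 ≤ N) (C : ℝ) (hC : 0 ≤ C)
    (z : EuclideanSpace ℝ (Fin N) → ℝ)
    (hconv : ConvexOn ℝ Set.univ z) (hdiff : Differentiable ℝ z)
    (hbnd : ∀ x, 0 ≤ z x ∧ z x ≤ ‖x‖ ^ 2 + 1 + C) :
    ∃ K > 0, ∀ x, ‖gradient z x‖ ≤ K * (1 + ‖x‖) :=
  stmt11_general N C hC z hconv hdiff hbnd
end
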